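/- Let L be a linear subspace of real symmetric m×m matrices containing at least one positive definite matrix, and let S be a real symmetric m×m matrix. Then the function K ↦ log det K − trace(S·K) attains a maximum on the set {K ∈ L : K positive definite} if and only if there exists a positive definite matrix Σ with trace(Σ·K) = trace(S·K) for all K ∈ L. In other words, the maximum likelihood estimate exists for S if and only if fiber_L(S) is non-empty. -/

import Mathlib

/-!
If `K̂` maximises `ℓ_S(K) = log det K - tr(S K)` over the positive definite matrices of `L`,
then for every `K ∈ L` the matrices `K̂ + t K` stay positive definite for small `t`, and the
derivative `d/dt log det (K̂ + t K) = tr(K̂⁻¹ K)` at `t = 0` gives `tr(K̂⁻¹ K) = tr(S K)`: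
`K̂⁻¹` lies in the fiber.

Conversely, if `Σ` lies in the fiber then `ℓ_S = ℓ_Σ` on `L`. Since `Σ ≥ α I` for some `α > 0`,
`tr(Σ K) ≥ α tr K`, while `log det K ≤ (α/2) tr K + const`; so the superlevel sets of `ℓ_Σ` have
bounded trace, hence are compact, and `ℓ_Σ` attains its maximum on `L`.
-/

open Matrix Topology Filter

namespace Matrix

variable {n : Type*} [Fintype n]

theorem PosDef.eventually_posDef {A : Matrix n n ℝ} (hA : A.PosDef) :
    ∀ᶠ B in 𝓝 A, B.IsHermitian → B.PosDef := by
  -- Positivity on the compact unit sphere persists near `A`; homogeneity extends it to all `x ≠ 0`.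
  have hsphere : ∀ᶠ B in 𝓝 A, ∀ x ∈ Metric.sphere (0 : n → ℝ) 1, 0 < x ⬝ᵥ B *ᵥ x := by
    refine (isCompact_sphere 0 1).eventually_forall_of_forall_eventually fun x hx => ?_
    have hcont : Continuous fun p : Matrix n n ℝ × (n → ℝ) => p.2 ⬝ᵥ p.1 *ᵥ p.2 :=
      continuous_snd.dotProduct (continuous_fst.matrix_mulVec continuous_snd)
    have hx0 : x ≠ 0 := by rintro rfl; simp at hx
    exact (hcont.tendsto (A, x)).eventually
      (lt_mem_nhds (by simpa using hA.dotProduct_mulVec_pos hx0))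
  filter_upwards [hsphere] with B hB hBh
  refine PosDef.of_dotProduct_mulVec_pos hBh fun x hx => ?_
  have hpos := hB (‖x‖⁻¹ • x) (by simp [norm_smul, hx])
  have hnorm : 0 < ‖x‖⁻¹ * ‖x‖⁻¹ := by positivity
  simp only [mulVec_smul, dotProduct_smul, smul_dotProduct, smul_eq_mul, ← mul_assoc] at hpos
  simpa using pos_of_mul_pos_right hpos hnorm.le

theorem PosDef.eventually_add_smul_posDef {A K : Matrix n n ℝ} (hA : A.PosDef)
    (hK : K.IsHermitian) : ∀ᶠ t in 𝓝 (0 : ℝ), (A + t • K).PosDef := by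
  have hlim : Tendsto (fun t : ℝ => A + t • K) (𝓝 0) (𝓝 A) := by
    simpa using tendsto_const_nhds.add
      ((continuous_id.smul continuous_const).tendsto' (0 : ℝ) (0 : Matrix n n ℝ) (zero_smul ℝ K))
  filter_upwards [hlim.eventually hA.eventually_posDef] with t ht
  exact ht (hA.isHermitian.add (hK.smul (IsSelfAdjoint.all t)))

theorem hasDerivAt_det_one_add_smul [DecidableEq n] (M : Matrix n n ℝ) :
    HasDerivAt (fun t : ℝ => (1 + t • M).det) M.trace 0 := by
  have hp :=
    Polynomial.hasDerivAt (det (1 + (Polynomial.X : Polynomial ℝ) • M.map Polynomial.C)) 0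
  rw [derivative_det_one_add_X_smul] at hp
  refine hp.congr_of_eventuallyEq (Eventually.of_forall fun t => ?_)
  simp [eval_det, ← smul_eq_mul_diagonal]

theorem hasDerivAt_log_det_add_smul [DecidableEq n] {A : Matrix n n ℝ} (hA : A.det ≠ 0)
    (K : Matrix n n ℝ) :
    HasDerivAt (fun t : ℝ => Real.log (A + t • K).det) (A⁻¹ * K).trace 0 := by
  have hfactor : ∀ t : ℝ, A + t • K = A * (1 + t • (A⁻¹ * K)) := fun t => by
    rw [Matrix.mul_add, Matrix.mul_one, mul_smul_comm, ← Matrix.mul_assoc,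
      mul_nonsing_inv _ hA.isUnit, Matrix.one_mul]
  have hdet : HasDerivAt (fun t : ℝ => (A + t • K).det) (A.det * (A⁻¹ * K).trace) 0 := by
    simpa only [hfactor, det_mul] using (hasDerivAt_det_one_add_smul (A⁻¹ * K)).const_mul A.det
  simpa [hA] using hdet.log (by simpa using hA)

open scoped MatrixOrder in
theorem PosSemidef.trace_mul_nonneg {A B : Matrix n n ℝ} (hA : A.PosSemidef)
    (hB : B.PosSemidef) : 0 ≤ (A * B).trace := by
  classical
  obtain ⟨C, rfl⟩ := CStarAlgebra.nonneg_iff_eq_star_mul_self.mp hB.nonneg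
  rw [star_eq_conjTranspose, ← Matrix.mul_assoc, trace_mul_comm, ← Matrix.mul_assoc]
  exact (hA.mul_mul_conjTranspose_same C).trace_nonneg

open scoped MatrixOrder in
theorem PosDef.exists_pos_mul_trace_le_trace_mul {Sig : Matrix n n ℝ} (hSig : Sig.PosDef) :
    ∃ α : ℝ, 0 < α ∧ ∀ K : Matrix n n ℝ, K.PosSemidef → α * K.trace ≤ (Sig * K).trace := by
  classical
  cases isEmpty_or_nonempty n
  · exact ⟨1, one_pos, fun K _ => by simp [Subsingleton.elim K 0]⟩
  have hstrict := isStrictlyPositive_iff_posDef.mpr hSig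
  obtain ⟨α, hα, hle⟩ := (CFC.exists_pos_algebraMap_le_iff hstrict.isSelfAdjoint).2
    fun x hx => hstrict.spectrum_pos hx
  refine ⟨α, hα, fun K hK => ?_⟩
  have hsub : (Sig - α • 1).PosSemidef := by
    simpa [Matrix.le_iff, Algebra.algebraMap_eq_smul_one] using hle
  have := hsub.trace_mul_nonneg hK
  rwa [Matrix.sub_mul, smul_mul, Matrix.one_mul, trace_sub, trace_smul, smul_eq_mul,
    sub_nonneg] at this

theorem PosDef.log_det_le [DecidableEq n] {K : Matrix n n ℝ} (hK : K.PosDef) {β : ℝ}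
    (hβ : 0 < β) :
    Real.log K.det ≤ β * K.trace - Fintype.card n * (1 + Real.log β) := by
  have hev := hK.eigenvalues_pos
  have hterm : ∀ i, Real.log (hK.isHermitian.eigenvalues i)
      ≤ β * hK.isHermitian.eigenvalues i - (1 + Real.log β) := fun i => by
    have := Real.log_le_sub_one_of_pos (mul_pos hβ (hev i))
    rw [Real.log_mul hβ.ne' (hev i).ne'] at this
    linarith
  rw [hK.isHermitian.det_eq_prod_eigenvalues, hK.isHermitian.trace_eq_sum_eigenvalues]
  simp only [RCLike.ofReal_real_eq_id, id]
  rw [Real.log_prod fun i _ => (hev i).ne']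
  calc ∑ i, Real.log (hK.isHermitian.eigenvalues i)
      ≤ ∑ i, (β * hK.isHermitian.eigenvalues i - (1 + Real.log β)) :=
        Finset.sum_le_sum fun i _ => hterm i
    _ = β * ∑ i, hK.isHermitian.eigenvalues i - Fintype.card n * (1 + Real.log β) := by
        rw [Finset.sum_sub_distrib, ← Finset.mul_sum, Finset.sum_const, Finset.card_univ,
          nsmul_eq_mul]

theorem PosSemidef.abs_apply_le_trace {K : Matrix n n ℝ} (hK : K.PosSemidef) (i j : n) :
    |K i j| ≤ K.trace := by
  classical
  have hdiag : ∀ k, K k k ≤ K.trace := fun k =>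
    Finset.single_le_sum (f := fun l => K l l) (fun l _ => hK.diag_nonneg) (Finset.mem_univ k)
  have hsymm : K j i = K i j := by simpa using hK.isHermitian.apply i j
  have hplus := hK.dotProduct_mulVec_nonneg (Pi.single i 1 + Pi.single j 1)
  have hminus := hK.dotProduct_mulVec_nonneg (Pi.single i 1 - Pi.single j 1)
  simp only [star_trivial, mulVec_add, mulVec_sub, dotProduct_add, dotProduct_sub,
    add_dotProduct, sub_dotProduct, mulVec_single_one,
    single_one_dotProduct, col_apply] at hplus hminus
  rw [abs_le]
  constructor <;> linarith [hdiag i, hdiag j]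

theorem isClosed_setOf_posSemidef : IsClosed {K : Matrix n n ℝ | K.PosSemidef} := by
  simp only [posSemidef_iff_dotProduct_mulVec, Set.ofPred_and, Set.ofPred_forall]
  exact (isClosed_eq continuous_id.matrix_conjTranspose continuous_id).inter
    (isClosed_iInter fun x => isClosed_le continuous_const
      (continuous_const.dotProduct (continuous_id.matrix_mulVec continuous_const)))

theorem isCompact_setOf_posSemidef_trace_le (R : ℝ) :
    IsCompact {K : Matrix n n ℝ | K.PosSemidef ∧ K.trace ≤ R} := by
  have hbox : IsCompact (Set.univ.pi fun _ : n => Set.univ.pi fun _ : n => Set.Icc (-R) R :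
      Set (Matrix n n ℝ)) :=
    isCompact_univ_pi fun _ => isCompact_univ_pi fun _ => isCompact_Icc
  refine hbox.of_isClosed_subset (isClosed_setOf_posSemidef.inter
    (isClosed_le continuous_id.matrix_trace continuous_const)) ?_
  rintro K ⟨hK, hR⟩ i - j -
  exact abs_le.mp ((hK.abs_apply_le_trace i j).trans hR)

end Matrix

section GaussianLogLikelihood

variable {n : Type*} [Fintype n] [DecidableEq n]

noncomputable def gaussianLogLikelihood (S K : Matrix n n ℝ) : ℝ :=
  Real.log K.det - (S * K).trace

theorem Matrix.PosDef.trace_inv_mul_eq_of_gaussianLogLikelihood_le {S A K : Matrix n n ℝ}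
    (hA : A.PosDef) (hK : K.IsHermitian)
    (hmax : ∀ t : ℝ, (A + t • K).PosDef →
      gaussianLogLikelihood S (A + t • K) ≤ gaussianLogLikelihood S A) :
    (A⁻¹ * K).trace = (S * K).trace := by
  have htrace : HasDerivAt (fun t : ℝ => (S * (A + t • K)).trace) (S * K).trace 0 := by
    simp only [Matrix.mul_add, mul_smul_comm, trace_add, trace_smul, smul_eq_mul]
    simpa using ((hasDerivAt_id (0 : ℝ)).mul_const (S * K).trace).const_add (S * A).trace
  have hderiv : HasDerivAt (fun t : ℝ => gaussianLogLikelihood S (A + t • K))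
      ((A⁻¹ * K).trace - (S * K).trace) 0 := by
    unfold gaussianLogLikelihood
    exact (hasDerivAt_log_det_add_smul hA.det_pos.ne' K).sub htrace
  have hlocal : IsLocalMax (fun t : ℝ => gaussianLogLikelihood S (A + t • K)) 0 := by
    filter_upwards [hA.eventually_add_smul_posDef hK] with t ht
    simpa using hmax t ht
  exact sub_eq_zero.mp (hlocal.hasDerivAt_eq_zero hderiv)

theorem exists_trace_le_of_le_gaussianLogLikelihood {Sig : Matrix n n ℝ}
    (hSig : Sig.PosDef) (c : ℝ) :
    ∃ R, ∀ K : Matrix n n ℝ, K.PosDef → c ≤ gaussianLogLikelihood Sig K → K.trace ≤ R := by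
  obtain ⟨α, hα, hle⟩ := hSig.exists_pos_mul_trace_le_trace_mul
  refine ⟨2 / α * (-(Fintype.card n * (1 + Real.log (α / 2))) - c), fun K hK hc => ?_⟩
  have hlog := hK.log_det_le (half_pos hα)
  have htrace := hle K hK.posSemidef
  unfold gaussianLogLikelihood at hc
  rw [div_mul_eq_mul_div, le_div_iff₀ hα]
  linarith

theorem isCompact_setOf_le_gaussianLogLikelihood {C : Set (Matrix n n ℝ)}
    (hC : IsClosed C) {Sig : Matrix n n ℝ} (hSig : Sig.PosDef) (c : ℝ) :
    IsCompact {K | K ∈ C ∧ K.PosDef ∧ c ≤ gaussianLogLikelihood Sig K} := by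
  obtain ⟨R, hR⟩ := exists_trace_le_of_le_gaussianLogLikelihood hSig c
  -- Without the logarithm the set is visibly closed: its limit points still have `det > 0`.
  have hset : {K | K ∈ C ∧ K.PosDef ∧ c ≤ gaussianLogLikelihood Sig K} =
      {K | K ∈ C ∧ K.PosSemidef ∧ Real.exp (c + (Sig * K).trace) ≤ K.det} := by
    ext K
    simp only [Set.mem_ofPred_eq, gaussianLogLikelihood]
    refine and_congr_right fun _ => ⟨fun ⟨hK, hc⟩ => ⟨hK.posSemidef, ?_⟩, fun ⟨hK, hexp⟩ => ?_⟩
    · rw [← Real.le_log_iff_exp_le hK.det_pos]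
      linarith
    · have hdet := (Real.exp_pos _).trans_le hexp
      rw [← Real.le_log_iff_exp_le hdet] at hexp
      exact ⟨hK.posDef_iff_det_ne_zero.2 hdet.ne', by linarith⟩
  refine (isCompact_setOf_posSemidef_trace_le R).of_isClosed_subset ?_
    fun K ⟨_, hK, hc⟩ => ⟨hK.posSemidef, hR K hK hc⟩
  rw [hset]
  exact hC.inter (isClosed_setOf_posSemidef.inter (isClosed_le
    (Real.continuous_exp.comp (continuous_const.add
      (continuous_const.matrix_mul continuous_id).matrix_trace))
    continuous_id.matrix_det))

theorem exists_forall_gaussianLogLikelihood_le {C : Set (Matrix n n ℝ)}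
    (hC : IsClosed C) {Sig : Matrix n n ℝ} (hSig : Sig.PosDef) {K₀ : Matrix n n ℝ}
    (hK₀C : K₀ ∈ C) (hK₀ : K₀.PosDef) :
    ∃ Khat ∈ C, Khat.PosDef ∧ ∀ K ∈ C, K.PosDef →
      gaussianLogLikelihood Sig K ≤ gaussianLogLikelihood Sig Khat := by
  set ℓ := gaussianLogLikelihood Sig
  have hcont : ContinuousOn ℓ {K | K ∈ C ∧ K.PosDef ∧ ℓ K₀ ≤ ℓ K} := fun K hK =>
    (((Real.continuousAt_log hK.2.1.det_pos.ne').comp continuous_id.matrix_det.continuousAt).sub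
      (continuous_const.matrix_mul continuous_id).matrix_trace.continuousAt).continuousWithinAt
  obtain ⟨Khat, ⟨hKhatC, hKhat, -⟩, hmax⟩ :=
    (isCompact_setOf_le_gaussianLogLikelihood hC hSig (ℓ K₀)).exists_isMaxOn
      ⟨K₀, hK₀C, hK₀, le_rfl⟩ hcont
  refine ⟨Khat, hKhatC, hKhat, fun K hKC hK => ?_⟩
  by_cases hK₀K : ℓ K₀ ≤ ℓ K
  · exact hmax ⟨hKC, hK, hK₀K⟩
  · exact (not_le.mp hK₀K).le.trans (hmax ⟨hK₀C, hK₀, le_rfl⟩)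

end GaussianLogLikelihood

theorem mle_exists_iff_fiber_nonempty_general
    (m : ℕ) (L : Submodule ℝ (Matrix (Fin m) (Fin m) ℝ))
    (hLsymm : ∀ K ∈ L, (K : Matrix (Fin m) (Fin m) ℝ).IsSymm)
    (hLpd : ∃ K ∈ L, Matrix.PosDef K)
    (S : Matrix (Fin m) (Fin m) ℝ) :
    (∃ Khat ∈ L, Matrix.PosDef Khat ∧
        ∀ K ∈ L, Matrix.PosDef K →
          Real.log K.det - (S * K).trace
            ≤ Real.log Khat.det - (S * Khat).trace) ↔
      (∃ Sig : Matrix (Fin m) (Fin m) ℝ, Sig.PosDef ∧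
        ∀ K ∈ L, (Sig * K).trace = (S * K).trace) := by
  constructor
  · rintro ⟨Khat, hKhatL, hKhat, hmax⟩
    refine ⟨Khat⁻¹, hKhat.inv, fun K hKL => ?_⟩
    exact hKhat.trace_inv_mul_eq_of_gaussianLogLikelihood_le
      (isHermitian_iff_isSymm.2 (hLsymm K hKL))
      fun t => hmax _ (L.add_mem hKhatL (L.smul_mem t hKL))
  · rintro ⟨Sig, hSig, hfiber⟩
    obtain ⟨K₀, hK₀L, hK₀⟩ := hLpd
    obtain ⟨Khat, hKhatL, hKhat, hmax⟩ := exists_forall_gaussianLogLikelihood_le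
      L.closed_of_finiteDimensional hSig hK₀L hK₀
    refine ⟨Khat, hKhatL, hKhat, fun K hKL hK => ?_⟩
    simpa only [gaussianLogLikelihood, hfiber K hKL, hfiber Khat hKhatL] using hmax K hKL hK

/-- Existence of the maximum likelihood estimate: the log-likelihood
`K ↦ log det K − trace(S·K)` attains a maximum on the positive definite
matrices of the linear space `L` of symmetric matrices (which contains a
positive definite matrix) if and only if the fiber
`{Σ ≻ 0 : trace(Σ·K) = trace(S·K) for all K ∈ L}` is non-empty. -/
theorem mle_exists_iff_fiber_nonempty
    (m : ℕ) (L : Submodule ℝ (Matrix (Fin m) (Fin m) ℝ))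
    (hLsymm : ∀ K ∈ L, (K : Matrix (Fin m) (Fin m) ℝ).IsSymm)
    (hLpd : ∃ K ∈ L, Matrix.PosDef K)
    (S : Matrix (Fin m) (Fin m) ℝ) (hS : S.IsSymm) :
    (∃ Khat ∈ L, Matrix.PosDef Khat ∧
        ∀ K ∈ L, Matrix.PosDef K →
          Real.log K.det - (S * K).trace
            ≤ Real.log Khat.det - (S * Khat).trace) ↔
      (∃ Sig : Matrix (Fin m) (Fin m) ℝ, Sig.PosDef ∧
        ∀ K ∈ L, (Sig * K).trace = (S * K).trace) :=
  mle_exists_iff_fiber_nonempty_general m L hLsymm hLpd S
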